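/- Suppose that for every m-multisample the feasibility region 𝒳_m of P_2[{δ_i}_{i=1}^m] has nonempty interior. Fix d = 2n_δ and m ≥ d. Then for every ε ∈ (0,1): ℙ^m{(δ_1,…,δ_m) ∈ Δ^m : sup_{x∈𝒳_m} ℙ(δ ∈ Δ : g(x, δ) > 0) > ε} ≤ binom(m,d)·(1−ε)^{m−d}; that is, the probabilistic constraint-violation guarantee holds uniformly over the entire feasibility region of the robust problem P_2[{δ_i}_{i=1}^m]. -/

import Mathlib

open MeasureTheory

/-- `B(p_S)`: the smallest axis-aligned hyper-rectangle containing the samples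
`{δ_i}_{i∈S}`. -/
def sampleBox {nδ m : ℕ} (ω : Fin m → Fin nδ → ℝ) (S : Finset (Fin m)) :
    Set (Fin nδ → ℝ) :=
  {δ | ∀ ℓ : Fin nδ, sInf ((fun i => ω i ℓ) '' (S : Set (Fin m))) ≤ δ ℓ ∧
    δ ℓ ≤ sSup ((fun i => ω i ℓ) '' (S : Set (Fin m)))}

/-- Feasibility region `𝒳_m` of the robust problem `P₂[{δ_i}_{i∈S}]`. -/
def robustFeas {nδ nx m : ℕ} (X : Set (Fin nx → ℝ))
    (g : (Fin nx → ℝ) → (Fin nδ → ℝ) → ℝ)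
    (ω : Fin m → Fin nδ → ℝ) (S : Finset (Fin m)) : Set (Fin nx → ℝ) :=
  {x | x ∈ X ∧ ∀ δ ∈ sampleBox ω S, g x δ ≤ 0}

/-!
The box of all `m` samples is already the box of `d = 2 nδ` of them: for each coordinate keep a
sample attaining the minimum and one attaining the maximum, and pad to `d` indices. A feasible `x`
violating with probability `> ε` forces this box to have mass `≤ 1 - ε`, so the bad event lies in
the union, over the `binom(m, d)` index sets `I` of size `d`, of the events "the box of the samples
in `I` has mass `≤ 1 - ε` and contains every other sample". Conditionally on the samples in `I`,
the remaining `m - d` independent samples each fall in that box with probability `≤ 1 - ε`.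
-/

open Finset ENNReal

theorem le_one_sub_of_lt_measure_compl {α : Type*} [MeasurableSpace α] {μ : Measure α}
    [IsProbabilityMeasure μ] {s : Set α} (hs : MeasurableSet s) {t : ℝ≥0∞}
    (ht : t < μ sᶜ) : μ s ≤ 1 - t := by
  rw [prob_compl_eq_one_sub hs] at ht
  exact ENNReal.le_sub_of_add_le_left (ne_top_of_lt ht) (lt_tsub_iff_right.1 ht).le

theorem measurableSet_setOf_mem_Icc_iInf_iSup {κ ι : Type*} [Countable κ] [Countable ι] :
    MeasurableSet {q : (κ → ι → ℝ) × (ι → ℝ) | q.2 ∈ Set.Icc (⨅ i, q.1 i) (⨆ i, q.1 i)} := by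
  have hinf : Measurable fun y : κ → ι → ℝ => ⨅ i, y i := measurable_pi_iff.2 fun ℓ => by
    simp only [iInf_apply]; exact Measurable.iInf fun i => by fun_prop
  have hsup : Measurable fun y : κ → ι → ℝ => ⨆ i, y i := measurable_pi_iff.2 fun ℓ => by
    simp only [iSup_apply]; exact Measurable.iSup fun i => by fun_prop
  exact (measurableSet_le (hinf.comp measurable_fst) measurable_snd).inter
    (measurableSet_le measurable_snd (hsup.comp measurable_fst))

theorem measurableSet_setOf_measure_le_and_forall_mem {β α κ : Type*} [MeasurableSpace β]
    [MeasurableSpace α] [Countable κ] (μ : Measure α) [SFinite μ] {B : β → Set α}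
    (hB : MeasurableSet {q : β × α | q.2 ∈ B q.1}) (s : ℝ≥0∞) :
    MeasurableSet {q : β × (κ → α) | μ (B q.1) ≤ s ∧ ∀ j, q.2 j ∈ B q.1} := by
  refine measurableSet_setOfPred.2 (.and ?_ (.forall fun j => ?_))
  · exact measurableSet_setOfPred.1 <| measurableSet_le
      ((measurable_measure_prodMk_left hB).comp measurable_fst) measurable_const
  · exact (measurableSet_setOfPred.1 hB).comp
      (measurable_fst.prodMk ((measurable_pi_apply j).comp measurable_snd))

theorem prod_measure_setOf_forall_mem_le_pow {β α κ : Type*} [MeasurableSpace β]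
    [MeasurableSpace α] [Fintype κ] (ν : Measure β) [IsProbabilityMeasure ν] (μ : Measure α)
    [SigmaFinite μ] {B : β → Set α} (hB : MeasurableSet {q : β × α | q.2 ∈ B q.1}) (s : ℝ≥0∞) :
    (ν.prod (Measure.pi fun _ : κ => μ)) {q | μ (B q.1) ≤ s ∧ ∀ j, q.2 j ∈ B q.1} ≤
      s ^ Fintype.card κ := by
  rw [Measure.prod_apply (measurableSet_setOf_measure_le_and_forall_mem μ hB s)]
  calc _ ≤ ∫⁻ _, s ^ Fintype.card κ ∂ν := lintegral_mono fun y => ?_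
    _ = s ^ Fintype.card κ := by simp
  by_cases hy : μ (B y) ≤ s
  · calc _ ≤ (Measure.pi fun _ : κ => μ) (Set.univ.pi fun _ => B y) :=
          measure_mono fun z hz j _ => hz.2 j
      _ = μ (B y) ^ Fintype.card κ := by rw [Measure.pi_pi, prod_const, card_univ]
      _ ≤ s ^ Fintype.card κ := pow_le_pow_left' hy _
  · simp [hy]

theorem pi_measure_setOf_forall_mem_le_pow {α ι : Type*} [MeasurableSpace α] [Fintype ι]
    (μ : Measure α) [IsProbabilityMeasure μ] (p : ι → Prop) [DecidablePred p]
    {B : (Subtype p → α) → Set α} (hB : MeasurableSet {q : (Subtype p → α) × α | q.2 ∈ B q.1})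
    (s : ℝ≥0∞) :
    (Measure.pi fun _ : ι => μ)
      {ω | μ (B fun i => ω i) ≤ s ∧ ∀ j : {j // ¬ p j}, ω j ∈ B fun i => ω i} ≤
      s ^ Fintype.card {j // ¬ p j} :=
  ((measurePreserving_piEquivPiSubtypeProd (fun _ : ι => μ) p).measure_preimage
    (measurableSet_setOf_measure_le_and_forall_mem μ hB s).nullMeasurableSet).trans_le
    (prod_measure_setOf_forall_mem_le_pow _ μ hB s)

section sampleBox
variable {nδ m : ℕ} (ω : Fin m → Fin nδ → ℝ)

theorem sampleBox_eq_Icc (S : Finset (Fin m)) :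
    sampleBox ω S = Set.Icc (⨅ i : S, ω i) (⨆ i : S, ω i) := by
  ext δ
  simp only [sampleBox, Set.mem_Icc, Pi.le_def, iInf_apply, iSup_apply, Set.image_eq_range,
    forall_and]
  rfl

theorem measurableSet_sampleBox (S : Finset (Fin m)) : MeasurableSet (sampleBox ω S) := by
  rw [sampleBox_eq_Icc]; exact measurableSet_Icc

theorem mem_sampleBox {S : Finset (Fin m)} {i : Fin m} (hi : i ∈ S) : ω i ∈ sampleBox ω S := by
  rw [sampleBox_eq_Icc]
  exact ⟨ciInf_le (Set.finite_range fun i : S => ω i).bddBelow ⟨i, hi⟩,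
    le_ciSup (Set.finite_range fun i : S => ω i).bddAbove ⟨i, hi⟩⟩

theorem sampleBox_eq_of_subset_of_exists_min_max {I J : Finset (Fin m)} (hIJ : I ⊆ J)
    (hmin : ∀ ℓ, ∃ i ∈ I, ∀ j ∈ J, ω i ℓ ≤ ω j ℓ)
    (hmax : ∀ ℓ, ∃ i ∈ I, ∀ j ∈ J, ω j ℓ ≤ ω i ℓ) :
    sampleBox ω I = sampleBox ω J := by
  have hinf : ∀ ℓ, sInf ((fun i => ω i ℓ) '' (I : Set (Fin m))) =
      sInf ((fun i => ω i ℓ) '' (J : Set (Fin m))) := fun ℓ => by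
    obtain ⟨i, hi, hle⟩ := hmin ℓ
    have h (K : Finset (Fin m)) (hK : K ⊆ J) (hiK : i ∈ K) :
        sInf ((fun i => ω i ℓ) '' (K : Set (Fin m))) = ω i ℓ :=
      IsLeast.csInf_eq ⟨⟨i, hiK, rfl⟩, by rintro _ ⟨j, hj, rfl⟩; exact hle j (hK hj)⟩
    rw [h I hIJ hi, h J subset_rfl (hIJ hi)]
  have hsup : ∀ ℓ, sSup ((fun i => ω i ℓ) '' (I : Set (Fin m))) =
      sSup ((fun i => ω i ℓ) '' (J : Set (Fin m))) := fun ℓ => by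
    obtain ⟨i, hi, hle⟩ := hmax ℓ
    have h (K : Finset (Fin m)) (hK : K ⊆ J) (hiK : i ∈ K) :
        sSup ((fun i => ω i ℓ) '' (K : Set (Fin m))) = ω i ℓ :=
      IsGreatest.csSup_eq ⟨⟨i, hiK, rfl⟩, by rintro _ ⟨j, hj, rfl⟩; exact hle j (hK hj)⟩
    rw [h I hIJ hi, h J subset_rfl (hIJ hi)]
  simp only [sampleBox, hinf, hsup]

theorem exists_card_eq_sampleBox_eq_univ (hm : 2 * nδ ≤ m) :
    ∃ I : Finset (Fin m), #I = 2 * nδ ∧ sampleBox ω I = sampleBox ω univ := by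
  have hne (ℓ : Fin nδ) : Nonempty (Fin m) := ⟨⟨0, by have := ℓ.isLt; omega⟩⟩
  choose imin himin using fun ℓ => have := hne ℓ; Finite.exists_min fun i => ω i ℓ
  choose imax himax using fun ℓ => have := hne ℓ; Finite.exists_max fun i => ω i ℓ
  have hcard : #(image imin univ ∪ image imax univ) ≤ 2 * nδ := by
    grw [card_union_le, card_image_le, card_image_le]; simp [two_mul]
  obtain ⟨I, hextI, -, hIcard⟩ := exists_subsuperset_card_eq (subset_univ _) hcard (by simpa)
  refine ⟨I, hIcard, sampleBox_eq_of_subset_of_exists_min_max ω (subset_univ I)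
    (fun ℓ => ⟨imin ℓ, ?_, fun j _ => himin ℓ j⟩) (fun ℓ => ⟨imax ℓ, ?_, fun j _ => himax ℓ j⟩)⟩
  all_goals exact hextI (by simp)

end sampleBox

theorem measure_setOf_forall_mem_sampleBox_le {nδ m : ℕ} (P : Measure (Fin nδ → ℝ))
    [IsProbabilityMeasure P] (I : Finset (Fin m)) (s : ℝ≥0∞) :
    (Measure.pi fun _ : Fin m => P)
      {ω | P (sampleBox ω I) ≤ s ∧ ∀ j, ω j ∈ sampleBox ω I} ≤ s ^ (m - #I) := by
  calc _ ≤ (Measure.pi fun _ : Fin m => P)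
        {ω | P (Set.Icc (⨅ i : I, ω i) (⨆ i : I, ω i)) ≤ s ∧
          ∀ j : {j // j ∉ I}, ω j ∈ Set.Icc (⨅ i : I, ω i) (⨆ i : I, ω i)} :=
        measure_mono fun ω hω => by
          simp only [sampleBox_eq_Icc] at hω; exact ⟨hω.1, fun j => hω.2 j⟩
    _ ≤ s ^ Fintype.card {j // j ∉ I} :=
        pi_measure_setOf_forall_mem_le_pow P (· ∈ I)
          (B := fun y => Set.Icc (⨅ i, y i) (⨆ i, y i)) measurableSet_setOf_mem_Icc_iInf_iSup s
    _ = s ^ (m - #I) := by rw [Fintype.card_subtype_compl, Fintype.card_fin, Fintype.card_coe]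

theorem robust_design_uniform_violation_bound_general
    (nδ nx : ℕ) (P : Measure (Fin nδ → ℝ)) [IsProbabilityMeasure P]
    (X : Set (Fin nx → ℝ)) (g : (Fin nx → ℝ) → (Fin nδ → ℝ) → ℝ)
    (m : ℕ) (hm : 2 * nδ ≤ m)
    (ε : ℝ) (hε0 : 0 < ε) (hε1 : ε < 1) :
    (Measure.pi fun _ : Fin m => P)
      {ω : Fin m → Fin nδ → ℝ |
        ENNReal.ofReal ε <
          ⨆ x ∈ robustFeas X g ω Finset.univ, P {δ : Fin nδ → ℝ | 0 < g x δ}} ≤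
      ENNReal.ofReal ((m.choose (2 * nδ) : ℝ) * (1 - ε) ^ (m - 2 * nδ)) := by
  have hbad : {ω : Fin m → Fin nδ → ℝ | ENNReal.ofReal ε <
      ⨆ x ∈ robustFeas X g ω univ, P {δ | 0 < g x δ}} ⊆
      ⋃ I ∈ powersetCard (2 * nδ) univ,
        {ω | P (sampleBox ω I) ≤ 1 - ENNReal.ofReal ε ∧ ∀ j, ω j ∈ sampleBox ω I} := by
    intro ω (hω : ENNReal.ofReal ε < _)
    obtain ⟨x, hx, hviol⟩ := lt_biSup_iff.1 hω
    obtain ⟨I, hIcard, hI⟩ := exists_card_eq_sampleBox_eq_univ ω hm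
    refine Set.mem_biUnion (mem_powersetCard.2 ⟨subset_univ I, hIcard⟩) ⟨?_, fun j => ?_⟩
    · refine le_one_sub_of_lt_measure_compl (measurableSet_sampleBox ω I) (hviol.trans_le ?_)
      exact measure_mono fun δ hδ hmem => (hx.2 δ (hI ▸ hmem)).not_gt hδ
    · exact hI ▸ mem_sampleBox ω (mem_univ j)
  refine (measure_mono hbad).trans <| (measure_biUnion_finset_le _ _).trans <|
    (sum_le_sum fun I hI => (mem_powersetCard.1 hI).2 ▸
      measure_setOf_forall_mem_sampleBox_le P I _).trans_eq ?_
  rw [sum_const, card_powersetCard, card_univ, Fintype.card_fin, nsmul_eq_mul,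
    ENNReal.ofReal_mul (by positivity), ENNReal.ofReal_pow (by linarith),
    ENNReal.ofReal_natCast, ENNReal.ofReal_sub _ hε0.le, ENNReal.ofReal_one]

/-- feasibility-region-wide guarantee for the probabilistically robust
design: if for every multisample the feasibility region `𝒳_m` of `P₂[{δ_i}_{i=1}^m]`
has nonempty interior, then with `d = 2 n_δ ≤ m` and for every `ε ∈ (0,1)`,
`ℙ^m { sup_{x∈𝒳_m} ℙ(g(x,δ) > 0) > ε } ≤ binom(m,d) (1-ε)^(m-d)`. -/
theorem robust_design_uniform_violation_bound
    (nδ nx : ℕ) (P : Measure (Fin nδ → ℝ)) [IsProbabilityMeasure P]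
    (X : Set (Fin nx → ℝ)) (g : (Fin nx → ℝ) → (Fin nδ → ℝ) → ℝ)
    (m : ℕ) (hm : 2 * nδ ≤ m)
    (hfeas : ∀ ω : Fin m → Fin nδ → ℝ,
      (interior (robustFeas X g ω Finset.univ)).Nonempty)
    (ε : ℝ) (hε0 : 0 < ε) (hε1 : ε < 1) :
    (Measure.pi fun _ : Fin m => P)
      {ω : Fin m → Fin nδ → ℝ |
        ENNReal.ofReal ε <
          ⨆ x ∈ robustFeas X g ω Finset.univ, P {δ : Fin nδ → ℝ | 0 < g x δ}} ≤
      ENNReal.ofReal ((m.choose (2 * nδ) : ℝ) * (1 - ε) ^ (m - 2 * nδ)) :=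
  robust_design_uniform_violation_bound_general nδ nx P X g m hm ε hε0 hε1
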